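/- arXiv:0811.3945 — 8 statements merged into one kernel-verified Lean document; each statement's English description precedes it below -/
import Mathlib

section
/- Let X be a topological space, E a normed space with metric d induced by the norm, ψ : X → Set E a set-valued map with nonempty values, g : X → E continuous, and ε > 0. If ψ is lower semicontinuous (i.e., {x | (ψ x ∩ U).Nonempty} is open for every open U ⊆ E), then the set A = {x ∈ X | infDist (g x) (ψ x) ≥ ε} is closed in X. -/
theorem stmt0 {X E : Type*} [TopologicalSpace X] [NormedAddCommGroup E]
    (ψ : X → Set E) (hne : ∀ x, (ψ x).Nonempty) (g : X → E) (hg : Continuous g)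
    (ε : ℝ) (hε : 0 < ε)
    (hlsc : ∀ U : Set E, IsOpen U → IsOpen {x | (ψ x ∩ U).Nonempty}) :
    IsClosed {x | ε ≤ Metric.infDist (g x) (ψ x)} := by
  rw [← isOpen_compl_iff]
  rw [isOpen_iff_mem_nhds]
  intro x hx
  simp only [Set.mem_compl_iff, Set.mem_setOf_eq, not_le] at hx
  obtain ⟨y, hy, hyd⟩ := (Metric.infDist_lt_iff (hne x)).mp hx
  set r := dist (g x) y with hr
  set δ := (ε - r) / 3 with hδ
  have hδpos : 0 < δ := by rw [hδ]; linarith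
  have hV : IsOpen {x' | (ψ x' ∩ Metric.ball y δ).Nonempty} :=
    hlsc _ Metric.isOpen_ball
  have hW : IsOpen {x' | dist (g x') (g x) < δ} := by
    have : Continuous fun x' => dist (g x') (g x) := (hg.dist continuous_const)
    exact isOpen_lt this continuous_const
  have hxV : x ∈ {x' | (ψ x' ∩ Metric.ball y δ).Nonempty} :=
    ⟨y, hy, Metric.mem_ball_self hδpos⟩
  have hxW : x ∈ {x' | dist (g x') (g x) < δ} := by
    simp [hδpos]
  filter_upwards [hV.mem_nhds hxV, hW.mem_nhds hxW] with x' h1 h2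
  obtain ⟨z, hz, hzball⟩ := h1
  simp only [Set.mem_compl_iff, Set.mem_setOf_eq, not_le]
  calc Metric.infDist (g x') (ψ x') ≤ dist (g x') z := Metric.infDist_le_dist_of_mem hz
    _ ≤ dist (g x') (g x) + dist (g x) y + dist y z := dist_triangle4 _ _ _ _
    _ < δ + r + δ := by
        have := Metric.mem_ball.mp hzball
        rw [dist_comm] at this
        gcongr <;> simpa using h2
    _ ≤ ε := by rw [hδ]; linarith
end

section
/- Let X be a T1 topological space. Suppose that for every lower semicontinuous convex-compact-valued mapping φ : X → Set ℝ (with each φ x a nonempty compact convex subset of ℝ) and every ε > 0 and every continuous g : X → ℝ with infDist (g x) (φ x) < ε for all x, there exists a continuous f : X → ℝ with f x ∈ φ x and |f x - g x| < ε for all x. Then X is a normal space. -/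
theorem stmt4 {X : Type*} [TopologicalSpace X] [T1Space X]
    (hsel : ∀ φ : X → Set ℝ,
      (∀ x, (φ x).Nonempty) → (∀ x, IsCompact (φ x)) → (∀ x, Convex ℝ (φ x)) →
      (∀ U : Set ℝ, IsOpen U → IsOpen {x | (φ x ∩ U).Nonempty}) →
      ∀ ε > (0 : ℝ), ∀ g : X → ℝ, Continuous g →
        (∀ x, Metric.infDist (g x) (φ x) < ε) →
        ∃ f : X → ℝ, Continuous f ∧ ∀ x, f x ∈ φ x ∧ |f x - g x| < ε) :
    NormalSpace X := by
  classical
  constructor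
  intro A B hA hB hAB
  set φ : X → Set ℝ := fun x =>
    if x ∈ A then {0} else if x ∈ B then {1} else Set.Icc 0 1 with hφ
  have hsub : ∀ x, φ x ⊆ Set.Icc (0:ℝ) 1 := by
    intro x
    simp only [hφ]
    split_ifs
    · rintro y rfl; exact ⟨le_refl 0, zero_le_one⟩
    · rintro y rfl; exact ⟨zero_le_one, le_refl 1⟩
    · exact fun y hy => hy
  have hne : ∀ x, (φ x).Nonempty := by
    intro x
    simp only [hφ]
    split_ifs
    · exact ⟨0, rfl⟩
    · exact ⟨1, rfl⟩
    · exact ⟨0, ⟨le_refl 0, zero_le_one⟩⟩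
  have hcpt : ∀ x, IsCompact (φ x) := by
    intro x
    simp only [hφ]
    split_ifs
    · exact isCompact_singleton
    · exact isCompact_singleton
    · exact isCompact_Icc
  have hconv : ∀ x, Convex ℝ (φ x) := by
    intro x
    simp only [hφ]
    split_ifs
    · exact convex_singleton 0
    · exact convex_singleton 1
    · exact convex_Icc 0 1
  have hABd : ∀ x, x ∈ A → x ∉ B := fun x hx hx' =>
    Set.disjoint_left.mp hAB hx hx'
  have hlsc : ∀ U : Set ℝ, IsOpen U → IsOpen {x | (φ x ∩ U).Nonempty} := by
    intro U hU
    by_cases h0 : (0:ℝ) ∈ U <;> by_cases h1 : (1:ℝ) ∈ U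
    · have : {x | (φ x ∩ U).Nonempty} = Set.univ := by
        ext x
        simp only [Set.mem_setOf_eq, Set.mem_univ, iff_true, hφ]
        split_ifs
        · exact ⟨0, rfl, h0⟩
        · exact ⟨1, rfl, h1⟩
        · exact ⟨0, ⟨le_refl 0, zero_le_one⟩, h0⟩
      rw [this]; exact isOpen_univ
    · have : {x | (φ x ∩ U).Nonempty} = Bᶜ := by
        ext x
        simp only [Set.mem_setOf_eq, Set.mem_compl_iff, hφ]
        split_ifs with hxA hxB
        · simp only [Set.singleton_inter_nonempty]
          exact ⟨fun _ => hABd x hxA, fun _ => h0⟩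
        · simp only [Set.singleton_inter_nonempty]
          exact ⟨fun h => absurd h h1, fun h => absurd hxB h⟩
        · exact ⟨fun _ => hxB, fun _ => ⟨0, ⟨le_refl 0, zero_le_one⟩, h0⟩⟩
      rw [this]; exact hB.isOpen_compl
    · have : {x | (φ x ∩ U).Nonempty} = Aᶜ := by
        ext x
        simp only [Set.mem_setOf_eq, Set.mem_compl_iff, hφ]
        split_ifs with hxA hxB
        · simp only [Set.singleton_inter_nonempty]
          exact ⟨fun h => absurd h h0, fun h => absurd hxA h⟩
        · simp only [Set.singleton_inter_nonempty]
          exact ⟨fun _ => fun h => hABd x h hxB, fun _ => h1⟩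
        · exact ⟨fun _ => hxA, fun _ => ⟨1, ⟨zero_le_one, le_refl 1⟩, h1⟩⟩
      rw [this]; exact hA.isOpen_compl
    · by_cases hIU : (Set.Icc (0:ℝ) 1 ∩ U).Nonempty
      · have : {x | (φ x ∩ U).Nonempty} = (A ∪ B)ᶜ := by
          ext x
          simp only [Set.mem_setOf_eq, Set.mem_compl_iff, Set.mem_union, not_or, hφ]
          split_ifs with hxA hxB
          · simp only [Set.singleton_inter_nonempty]
            exact ⟨fun h => absurd h h0, fun h => absurd hxA h.1⟩
          · simp only [Set.singleton_inter_nonempty]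
            exact ⟨fun h => absurd h h1, fun h => absurd hxB h.2⟩
          · exact ⟨fun _ => ⟨hxA, hxB⟩, fun _ => hIU⟩
        rw [this]; exact (hA.union hB).isOpen_compl
      · have : {x | (φ x ∩ U).Nonempty} = ∅ := by
          ext x
          simp only [Set.mem_setOf_eq, Set.mem_empty_iff_false, iff_false]
          intro ⟨y, hy, hyU⟩
          exact hIU ⟨y, hsub x hy, hyU⟩
        rw [this]; exact isOpen_empty
  have hdist : ∀ x, Metric.infDist ((0:ℝ)) (φ x) < 2 := by
    intro x
    obtain ⟨y, hy⟩ := hne x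
    calc Metric.infDist (0:ℝ) (φ x) ≤ dist 0 y := Metric.infDist_le_dist_of_mem hy
      _ ≤ 1 := by
          have := hsub x hy
          rw [Real.dist_eq]
          rw [abs_sub_comm, abs_of_nonneg (by linarith [this.1])]
          linarith [this.2]
      _ < 2 := by norm_num
  obtain ⟨f, hf, hfx⟩ := hsel φ hne hcpt hconv hlsc 2 (by norm_num)
    (fun _ => 0) continuous_const hdist
  refine ⟨f ⁻¹' Set.Iio (1/2), f ⁻¹' Set.Ioi (1/2),
    (isOpen_Iio).preimage hf, (isOpen_Ioi).preimage hf, ?_, ?_, ?_⟩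
  · intro x hx
    have : f x ∈ φ x := (hfx x).1
    simp only [hφ, if_pos hx] at this
    rw [Set.mem_singleton_iff] at this
    simp only [Set.mem_preimage, Set.mem_Iio, this]
    norm_num
  · intro x hx
    have : f x ∈ φ x := (hfx x).1
    simp only [hφ, if_neg (fun h => hABd x h hx), if_pos hx] at this
    rw [Set.mem_singleton_iff] at this
    simp only [Set.mem_preimage, Set.mem_Ioi, this]
    norm_num
  · exact Set.disjoint_left.mpr fun x hx hx' => by
      simp only [Set.mem_preimage, Set.mem_Iio, Set.mem_Ioi] at hx hx'
      linarith
end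

section
/- Let X be a topological space and (F_n) a decreasing sequence of closed subsets of X with F_0 = X and ⋂ n, F_n = ∅. For x ∈ X let n(x) = max {n | x ∈ F_n} (well-defined since the intersection is empty). Define φ : X → Set ℝ by φ x = [0, 2^{-n(x)}]. Then φ is lower semicontinuous with nonempty compact convex values. -/
theorem stmt6 {X : Type*} [TopologicalSpace X]
    (F : ℕ → Set X) (hclosed : ∀ n, IsClosed (F n)) (hdec : Antitone F)
    (hF0 : F 0 = Set.univ) (hinter : ⋂ n, F n = ∅)
    (n : X → ℕ)
    (hn : ∀ x, x ∈ F (n x) ∧ ∀ m, x ∈ F m → m ≤ n x)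
    (φ : X → Set ℝ)
    (hφ : ∀ x, φ x = Set.Icc 0 ((2 : ℝ)⁻¹ ^ n x)) :
    (∀ U : Set ℝ, IsOpen U → IsOpen {x | (φ x ∩ U).Nonempty}) ∧
    (∀ x, (φ x).Nonempty ∧ IsCompact (φ x) ∧ Convex ℝ (φ x)) := by
  constructor
  · intro U hU
    rw [isOpen_iff_forall_mem_open]
    intro x hx
    refine ⟨(F (n x + 1))ᶜ, ?_, (hclosed _).isOpen_compl, ?_⟩
    · intro y hy
      have hny : n y ≤ n x := by
        by_contra h
        push_neg at h
        exact hy (hdec h (hn y).1)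
      obtain ⟨r, hr1, hr2⟩ := hx
      rw [hφ x] at hr1
      refine ⟨r, ?_, hr2⟩
      rw [hφ y]
      exact ⟨hr1.1, hr1.2.trans (pow_le_pow_of_le_one (by norm_num) (by norm_num) hny)⟩
    · intro hx'
      have := (hn x).2 _ hx'
      omega
  · intro x
    rw [hφ x]
    have hpos : (0:ℝ) ≤ (2:ℝ)⁻¹ ^ n x := by positivity
    exact ⟨⟨0, le_refl _, hpos⟩, isCompact_Icc, convex_Icc _ _⟩
end

section
/- Let X be a countably paracompact normal topological space, ξ : X → ℝ upper semicontinuous, η : X → ℝ lower semicontinuous, and ξ x < η x for all x ∈ X. Then there exists a continuous α : X → ℝ with ξ x < α x < η x for all x ∈ X. -/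
theorem stmt8 {X : Type*} [TopologicalSpace X] [NormalSpace X]
    (hcp : ∀ u : ℕ → Set X, (∀ n, IsOpen (u n)) → (⋃ n, u n) = Set.univ →
      ∃ v : ℕ → Set X, (∀ n, IsOpen (v n)) ∧ (⋃ n, v n) = Set.univ ∧
        (∀ n, v n ⊆ u n) ∧ LocallyFinite v)
    (ξ η : X → ℝ) (hξ : UpperSemicontinuous ξ) (hη : LowerSemicontinuous η)
    (hlt : ∀ x, ξ x < η x) :
    ∃ α : X → ℝ, Continuous α ∧ ∀ x, ξ x < α x ∧ α x < η x := by
  obtain ⟨q, hq⟩ := exists_surjective_nat ℚ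
  set u : ℕ → Set X := fun n => {x | ξ x < (q n : ℝ)} ∩ {x | (q n : ℝ) < η x} with hu
  have huo : ∀ n, IsOpen (u n) := fun n =>
    (hξ.isOpen_preimage _).inter (hη.isOpen_preimage _)
  have hcov : (⋃ n, u n) = Set.univ := by
    ext x
    simp only [Set.mem_iUnion, Set.mem_univ, iff_true]
    obtain ⟨r, hr1, hr2⟩ := exists_rat_btwn (hlt x)
    obtain ⟨n, rfl⟩ := hq r
    exact ⟨n, hr1, hr2⟩
  obtain ⟨v, hvo, hvcov, hvu, hvlf⟩ := hcp u huo hcov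
  obtain ⟨f, hf⟩ := PartitionOfUnity.exists_isSubordinate_of_locallyFinite
    isClosed_univ v hvo hvlf hvcov.ge
  refine ⟨fun x => ∑ᶠ n, f n x • (q n : ℝ), ?_, ?_⟩
  · exact f.continuous_finsum_smul fun n x _ => continuousAt_const
  · intro x
    have hxs : x ∈ (Set.univ : Set X) := Set.mem_univ x
    have hsum : ∑ i ∈ f.finsupport x, f i x = 1 := f.sum_finsupport hxs
    have hrng : ∀ i ∈ f.finsupport x, ξ x < (q i : ℝ) ∧ (q i : ℝ) < η x := by
      intro i hi
      have hx : x ∈ u i := hvu i (hf i (subset_tsupport _ ((f.mem_finsupport x).1 hi)))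
      exact ⟨hx.1, hx.2⟩
    have hne : (f.finsupport x).Nonempty := by
      rcases Finset.eq_empty_or_nonempty (f.finsupport x) with h | h
      · simp [h] at hsum
      · exact h
    have hpos : ∀ i ∈ f.finsupport x, 0 < f i x := by
      intro i hi
      exact lt_of_le_of_ne (f.nonneg i x) (Ne.symm ((f.mem_finsupport x).1 hi))
    have heq : (∑ᶠ n, f n x • (q n : ℝ)) = ∑ i ∈ f.finsupport x, f i x • (q i : ℝ) :=
      (f.sum_finsupport_smul_eq_finsum (fun i _ => (q i : ℝ))).symm
    dsimp only
    rw [heq]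
    constructor
    · calc ξ x = ∑ i ∈ f.finsupport x, f i x * ξ x := by
            rw [← Finset.sum_mul, hsum, one_mul]
        _ < ∑ i ∈ f.finsupport x, f i x • (q i : ℝ) := by
            refine Finset.sum_lt_sum_of_nonempty hne fun i hi => ?_
            exact (mul_lt_mul_iff_right₀ (hpos i hi)).2 (hrng i hi).1
    · calc (∑ i ∈ f.finsupport x, f i x • (q i : ℝ))
          < ∑ i ∈ f.finsupport x, f i x * η x := by
            refine Finset.sum_lt_sum_of_nonempty hne fun i hi => ?_
            exact (mul_lt_mul_iff_right₀ (hpos i hi)).2 (hrng i hi).2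
        _ = η x := by rw [← Finset.sum_mul, hsum, one_mul]
end

section
/- Let X be a topological space, E a metric space, φ : X → Set E lower semicontinuous with nonempty values, g : X → E continuous, and α : X → ℝ continuous with infDist (g x) (φ x) < α x for all x. Then the mapping ψ : X → Set E defined by ψ x = closure (φ x ∩ ball (g x) (α x)) has nonempty values and is lower semicontinuous. -/
theorem stmt9 {X E : Type*} [TopologicalSpace X] [MetricSpace E]
    (φ : X → Set E) (hne : ∀ x, (φ x).Nonempty)
    (hlsc : ∀ U : Set E, IsOpen U → IsOpen {x | (φ x ∩ U).Nonempty})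
    (g : X → E) (hg : Continuous g) (α : X → ℝ) (hα : Continuous α)
    (happrox : ∀ x, Metric.infDist (g x) (φ x) < α x)
    (ψ : X → Set E)
    (hψ : ∀ x, ψ x = closure (φ x ∩ Metric.ball (g x) (α x))) :
    (∀ x, (ψ x).Nonempty) ∧
    (∀ U : Set E, IsOpen U → IsOpen {x | (ψ x ∩ U).Nonempty}) := by
  have key : ∀ U : Set E, IsOpen U →
      IsOpen {x | (φ x ∩ Metric.ball (g x) (α x) ∩ U).Nonempty} := by
    intro U hU
    rw [isOpen_iff_mem_nhds]
    rintro x₀ ⟨y, ⟨⟨hyφ, hyb⟩, hyU⟩⟩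
    rw [Metric.mem_ball] at hyb
    obtain ⟨r, hr, hrU⟩ := Metric.isOpen_iff.1 hU y hyU
    set δ := α x₀ - dist y (g x₀) with hδ
    have hδpos : 0 < δ := by simp only [hδ]; linarith
    set ε := min (δ / 4) r with hε
    have hεpos : 0 < ε := lt_min (by linarith) hr
    have hεδ : ε ≤ δ / 4 := min_le_left _ _
    have h1 : IsOpen {x | (φ x ∩ Metric.ball y ε).Nonempty} := hlsc _ Metric.isOpen_ball
    have h2 : IsOpen {x | dist (g x) (g x₀) < ε} :=
      isOpen_lt (continuous_dist.comp (hg.prodMk continuous_const)) continuous_const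
    have h3 : IsOpen {x | α x₀ - ε < α x} := isOpen_lt continuous_const hα
    have hx₀ : x₀ ∈ ({x | (φ x ∩ Metric.ball y ε).Nonempty} ∩
        {x | dist (g x) (g x₀) < ε}) ∩ {x | α x₀ - ε < α x} :=
      ⟨⟨⟨y, hyφ, Metric.mem_ball_self hεpos⟩, by simpa using hεpos⟩, by
        simp only [Set.mem_setOf_eq]; linarith⟩
    filter_upwards [((h1.inter h2).inter h3).mem_nhds hx₀] with x hx
    obtain ⟨⟨⟨z, hzφ, hzb⟩, hgx⟩, hαx⟩ := hx
    rw [Metric.mem_ball] at hzb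
    refine ⟨z, ⟨hzφ, ?_⟩, hrU ?_⟩
    · rw [Metric.mem_ball]
      have t1 : dist z (g x) ≤ dist z y + dist y (g x₀) + dist (g x₀) (g x) := by
        calc dist z (g x) ≤ dist z (g x₀) + dist (g x₀) (g x) := dist_triangle _ _ _
          _ ≤ dist z y + dist y (g x₀) + dist (g x₀) (g x) := by
              linarith [dist_triangle z y (g x₀)]
      have hgx' : dist (g x₀) (g x) < ε := by rw [dist_comm]; exact hgx
      have hx3 : α x₀ - ε < α x := hαx
      simp only [hδ] at hεδ
      linarith
    · exact Metric.mem_ball.2 (lt_of_lt_of_le hzb (min_le_right _ _))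
  constructor
  · intro x
    obtain ⟨y, hy, hyd⟩ := (Metric.infDist_lt_iff (hne x)).1 (happrox x)
    rw [hψ]
    exact Set.Nonempty.closure ⟨y, hy, Metric.mem_ball'.2 hyd⟩
  · intro U hU
    have heq : {x | (ψ x ∩ U).Nonempty} =
        {x | (φ x ∩ Metric.ball (g x) (α x) ∩ U).Nonempty} := by
      ext x
      simp only [Set.mem_setOf_eq, hψ]
      constructor
      · rintro ⟨z, hzc, hzU⟩
        obtain ⟨w, hwU, hwS⟩ := mem_closure_iff.1 hzc U hU hzU
        exact ⟨w, hwS, hwU⟩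
      · rintro ⟨z, hzS, hzU⟩
        exact ⟨z, subset_closure hzS, hzU⟩
    rw [heq]
    exact key U hU
end

section
/- Let X be a topological space, E a metric space, φ : X → Set E lower semicontinuous with nonempty values, and g : X → E continuous. Define ξ : X → ℝ by ξ x = infDist (g x) (φ x). Then ξ is upper semicontinuous. -/
theorem stmt11 {X E : Type*} [TopologicalSpace X] [MetricSpace E]
    (φ : X → Set E) (hne : ∀ x, (φ x).Nonempty)
    (hlsc : ∀ U : Set E, IsOpen U → IsOpen {x | (φ x ∩ U).Nonempty})
    (g : X → E) (hg : Continuous g) :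
    UpperSemicontinuous (fun x => Metric.infDist (g x) (φ x)) := by
  intro x₀ r hr
  set ξ₀ := Metric.infDist (g x₀) (φ x₀) with hξ
  have hε : 0 < (r - ξ₀) / 3 := by
    have : ξ₀ < r := hr
    linarith
  set ε := (r - ξ₀) / 3 with hεdef
  obtain ⟨y, hy, hdy⟩ := (Metric.infDist_lt_iff (hne x₀)).mp (by linarith : ξ₀ < ξ₀ + ε)
  have hV : IsOpen {x | (φ x ∩ Metric.ball y ε).Nonempty} := hlsc _ Metric.isOpen_ball
  have hxV : x₀ ∈ {x | (φ x ∩ Metric.ball y ε).Nonempty} :=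
    ⟨y, hy, Metric.mem_ball_self hε⟩
  have h1 : ∀ᶠ x in nhds x₀, (φ x ∩ Metric.ball y ε).Nonempty := hV.mem_nhds hxV
  have h2 : ∀ᶠ x in nhds x₀, g x ∈ Metric.ball (g x₀) ε :=
    (hg.tendsto x₀) (Metric.ball_mem_nhds _ hε)
  filter_upwards [h1, h2] with x hx1 hx2
  obtain ⟨z, hzφ, hzb⟩ := hx1
  have h3 : Metric.infDist (g x) (φ x) ≤ dist (g x) z := Metric.infDist_le_dist_of_mem hzφ
  have h4 : dist (g x) z ≤ dist (g x) (g x₀) + dist (g x₀) y + dist y z := dist_triangle4 _ _ _ _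
  have hb : dist z y < ε := Metric.mem_ball.mp hzb
  have hg2 : dist (g x) (g x₀) < ε := Metric.mem_ball.mp hx2
  have : Metric.infDist (g x) (φ x) < r := by
    rw [dist_comm y z] at h4
    calc Metric.infDist (g x) (φ x) ≤ _ := h3.trans h4
    _ < ε + (ξ₀ + ε) + ε := by linarith
    _ = r := by rw [hεdef]; ring
  exact this
end

section
/- Let X be a topological space, E a metric space, h : X → E continuous, ψ : X → Set E lower semicontinuous with nonempty values, and ε > 0. Then the set U = {x ∈ X | infDist (h x) (ψ x) < ε} is open in X. -/
theorem stmt12 {X E : Type*} [TopologicalSpace X] [MetricSpace E]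
    (ψ : X → Set E) (hne : ∀ x, (ψ x).Nonempty)
    (hlsc : ∀ U : Set E, IsOpen U → IsOpen {x | (ψ x ∩ U).Nonempty})
    (h : X → E) (hh : Continuous h) (ε : ℝ) (hε : 0 < ε) :
    IsOpen {x | Metric.infDist (h x) (ψ x) < ε} := by
  rw [isOpen_iff_mem_nhds]
  intro x hx
  simp only [Set.mem_setOf_eq] at hx
  obtain ⟨y, hy, hdy⟩ := (Metric.infDist_lt_iff (hne x)).1 hx
  set δ := (ε - dist (h x) y) / 3 with hδdef
  have hδ : 0 < δ := by rw [hδdef]; linarith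
  have h1 : IsOpen {x' | (ψ x' ∩ Metric.ball y δ).Nonempty} :=
    hlsc _ Metric.isOpen_ball
  have h2 : x ∈ {x' | (ψ x' ∩ Metric.ball y δ).Nonempty} :=
    ⟨y, hy, Metric.mem_ball_self hδ⟩
  have h3 : {x' | dist (h x') (h x) < δ} ∈ nhds x := by
    have := (hh.tendsto x) (Metric.ball_mem_nhds (h x) hδ)
    simpa [Metric.ball, Set.preimage] using this
  filter_upwards [h1.mem_nhds h2, h3] with x' hx1 hx2
  obtain ⟨y', hy'ψ, hy'b⟩ := hx1
  have : Metric.infDist (h x') (ψ x') ≤ dist (h x') y' :=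
    Metric.infDist_le_dist_of_mem hy'ψ
  calc Metric.infDist (h x') (ψ x') ≤ dist (h x') y' := this
    _ ≤ dist (h x') (h x) + dist (h x) y + dist y y' := dist_triangle4 _ _ _ _
    _ < δ + dist (h x) y + δ := by
        have : dist y y' < δ := by rw [dist_comm]; exact Metric.mem_ball.1 hy'b
        linarith [hx2, this]
    _ < ε := by rw [hδdef]; linarith
end

section
/- Let X be a topological space, E a normed real vector space, ψ : X → Set E with nonempty convex values, ε > 0, g, h : X → E continuous, α : X → ℝ continuous with values in [0,1], A = {x | infDist (g x) (ψ x) ≥ ε}, U = {x | infDist (h x) (ψ x) < ε}. Assume A ⊆ U, h x ∈ ψ x for all x ∈ A, α x = 0 for x ∈ A, and α x = 1 for x ∈ X \ U. Then the continuous map f x = α x • g x + (1 - α x) • h x satisfies infDist (f x) (ψ x) < ε for all x ∈ X. -/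
theorem stmt13 {X E : Type*} [TopologicalSpace X] [NormedAddCommGroup E]
    [NormedSpace ℝ E]
    (ψ : X → Set E) (hne : ∀ x, (ψ x).Nonempty) (hconv : ∀ x, Convex ℝ (ψ x))
    (ε : ℝ) (hε : 0 < ε)
    (g h : X → E) (hg : Continuous g) (hh : Continuous h)
    (α : X → ℝ) (hα : Continuous α) (hα01 : ∀ x, α x ∈ Set.Icc (0 : ℝ) 1)
    (A U : Set X)
    (hA : A = {x | ε ≤ Metric.infDist (g x) (ψ x)})
    (hU : U = {x | Metric.infDist (h x) (ψ x) < ε})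
    (hAU : A ⊆ U) (hhA : ∀ x ∈ A, h x ∈ ψ x)
    (hα0 : ∀ x ∈ A, α x = 0) (hα1 : ∀ x ∈ Set.univ \ U, α x = 1) :
    ∀ x, Metric.infDist (α x • g x + (1 - α x) • h x) (ψ x) < ε := by
  intro x
  obtain ⟨ha0, ha1⟩ := hα01 x
  rw [Metric.infDist_lt_iff (hne x)]
  by_cases hxA : x ∈ A
  · refine ⟨h x, hhA x hxA, ?_⟩
    rw [hα0 x hxA]
    simpa using hε
  by_cases hxU : x ∈ U
  · -- infDist (g x) < ε and infDist (h x) < ε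
    have hgx : Metric.infDist (g x) (ψ x) < ε := by
      by_contra hc
      exact hxA (hA ▸ le_of_not_gt hc)
    have hhx : Metric.infDist (h x) (ψ x) < ε := by rw [hU] at hxU; exact hxU
    obtain ⟨p, hp, hpd⟩ := (Metric.infDist_lt_iff (hne x)).mp hgx
    obtain ⟨q, hq, hqd⟩ := (Metric.infDist_lt_iff (hne x)).mp hhx
    refine ⟨α x • p + (1 - α x) • q, hconv x hp hq ha0 (by linarith) (by ring), ?_⟩
    have key : dist (α x • g x + (1 - α x) • h x) (α x • p + (1 - α x) • q)
        ≤ α x * dist (g x) p + (1 - α x) * dist (h x) q := by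
      rw [dist_eq_norm, dist_eq_norm, dist_eq_norm]
      have : α x • g x + (1 - α x) • h x - (α x • p + (1 - α x) • q)
          = α x • (g x - p) + (1 - α x) • (h x - q) := by
        simp [smul_sub]; abel
      rw [this]
      calc ‖α x • (g x - p) + (1 - α x) • (h x - q)‖
          ≤ ‖α x • (g x - p)‖ + ‖(1 - α x) • (h x - q)‖ := norm_add_le _ _
        _ = α x * ‖g x - p‖ + (1 - α x) * ‖h x - q‖ := by
            rw [norm_smul, norm_smul, Real.norm_of_nonneg ha0,
              Real.norm_of_nonneg (by linarith)]
    have hdp : 0 ≤ dist (g x) p := dist_nonneg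
    have hdq : 0 ≤ dist (h x) q := dist_nonneg
    nlinarith [mul_le_mul_of_nonneg_left hpd.le ha0,
      mul_le_mul_of_nonneg_left hqd.le (by linarith : (0:ℝ) ≤ 1 - α x)]
  · have h1 : α x = 1 := hα1 x ⟨Set.mem_univ x, hxU⟩
    have hgx : Metric.infDist (g x) (ψ x) < ε := by
      by_contra hc
      exact hxA (hA ▸ le_of_not_gt hc)
    obtain ⟨p, hp, hpd⟩ := (Metric.infDist_lt_iff (hne x)).mp hgx
    refine ⟨p, hp, ?_⟩
    rw [h1]
    simpa using hpd
end
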